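/- arXiv:math/0606726 — 3 statements merged into one kernel-verified Lean document; each statement's English description precedes it below -/
import Mathlib

section
/- The map φ from permutations of {x_1 < ... < x_n} to triangulations of the (n+2)-gon, defined by iteratively joining the two current neighbors of the next letter of the permutation by a diagonal and then deleting that vertex, is surjective. -/
open scoped Classical

/-- `d` is a diagonal of the convex `(n+2)`-gon with vertices `0,…,n+1`
(in clockwise increasing order): it joins two nonadjacent vertices. -/
def IsDiagonal (n : ℕ) (d : ℕ × ℕ) : Prop :=
  d.1 < d.2 ∧ d.2 ≤ n + 1 ∧ d.2 ≠ d.1 + 1 ∧ ¬(d.1 = 0 ∧ d.2 = n + 1)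

/-- Two diagonals of a convex polygon cross. -/
def Crosses (d e : ℕ × ℕ) : Prop :=
  (d.1 < e.1 ∧ e.1 < d.2 ∧ d.2 < e.2) ∨ (e.1 < d.1 ∧ d.1 < e.2 ∧ e.2 < d.2)

/-- A triangulation of the convex `(n+2)`-gon: `n-1` pairwise noncrossing diagonals. -/
def IsTriangulation (n : ℕ) (D : Finset (ℕ × ℕ)) : Prop :=
  (∀ d ∈ D, IsDiagonal n d) ∧ (∀ d ∈ D, ∀ e ∈ D, ¬ Crosses d e) ∧ D.card = n - 1

/-- `{a,b}` (with `a<b`) is an edge of the triangulation `D`: a polygon side or a diagonal. -/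
def IsEdge (n : ℕ) (D : Finset (ℕ × ℕ)) (a b : ℕ) : Prop :=
  a < b ∧ b ≤ n + 1 ∧ (b = a + 1 ∨ (a = 0 ∧ b = n + 1) ∨ (a, b) ∈ D)

/-- `{a,b,c}` (with `a<b<c`) is a (triangular) face of the triangulation `D`. -/
def IsFace (n : ℕ) (D : Finset (ℕ × ℕ)) (a b c : ℕ) : Prop :=
  a < b ∧ b < c ∧ IsEdge n D a b ∧ IsEdge n D b c ∧ IsEdge n D a c

/-- An ear of a triangulation: a vertex incident to no diagonal. -/
def IsEar (n : ℕ) (D : Finset (ℕ × ℕ)) (v : ℕ) : Prop :=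
  v ≤ n + 1 ∧ ∀ d ∈ D, d.1 ≠ v ∧ d.2 ≠ v

/-- Degree of a vertex: number of edges (polygon sides and diagonals) incident to it. -/
noncomputable def degreeOf (n : ℕ) (D : Finset (ℕ × ℕ)) (v : ℕ) : ℕ :=
  ((Finset.range (n + 2)).filter (fun w => w ≠ v ∧ IsEdge n D (min v w) (max v w))).card

/-- The set of faces of a triangulation, as increasing triples. -/
noncomputable def facesSet (n : ℕ) (D : Finset (ℕ × ℕ)) : Finset (ℕ × ℕ × ℕ) :=
  (Finset.range (n + 2) ×ˢ Finset.range (n + 2) ×ˢ Finset.range (n + 2)).filter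
    (fun t => IsFace n D t.1 t.2.1 t.2.2)

/-- Predecessor of `v` in the vertex set `Y`. -/
def predIn (Y : Finset ℕ) (v : ℕ) : ℕ := WithBot.unbotD 0 (Y.filter (· < v)).max
/-- Successor of `v` in the vertex set `Y`. -/
def succIn (Y : Finset ℕ) (v : ℕ) : ℕ := WithTop.untopD 0 (Y.filter (v < ·)).min

/-- The iterative neighbor-joining construction: for each successive letter,
join its two current neighbors by a diagonal and delete the letter's vertex. -/
def phiAux : List ℕ → Finset ℕ → Finset (ℕ × ℕ)
  | [], _ => ∅
  | [_], _ => ∅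
  | v :: rest, Y => insert (predIn Y v, succIn Y v) (phiAux rest (Y.erase v))

/-- The map `φ` from permutations (standard words, letters `1,…,n`) to
triangulations of the `(n+2)`-gon with vertices `0,…,n+1`. -/
def phiT (n : ℕ) (l : List ℕ) : Finset (ℕ × ℕ) := phiAux l (Finset.range (n + 2))

/-- `t` is the third vertex of a face of `D` containing the polygon side `{i, i+1}`. -/
def FaceOnEdge (n : ℕ) (D : Finset (ℕ × ℕ)) (i t : ℕ) : Prop :=
  (t < i ∧ IsFace n D t i (i + 1)) ∨ (i + 1 < t ∧ IsFace n D i (i + 1) t)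

/-- `D` and `D'` differ by one diagonal flip, in the quadrilateral `a<b<c<d`. -/
def FlipAdj (n : ℕ) (D D' : Finset (ℕ × ℕ)) : Prop :=
  ∃ a b c d : ℕ, a < b ∧ b < c ∧ c < d ∧
    ((IsFace n D a b d ∧ IsFace n D b c d ∧ D' = insert (a, c) (D.erase (b, d))) ∨
     (IsFace n D a b c ∧ IsFace n D a c d ∧ D' = insert (b, d) (D.erase (a, c))))

/-- Sylvester adjacency: `u x z u' y u'' ~ u z x u' y u''` with `x ≤ y < z`. -/
def SylvAdj (w1 w2 : List ℕ) : Prop :=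
  ∃ (u u' u'' : List ℕ) (x y z : ℕ), x ≤ y ∧ y < z ∧
    w1 = u ++ x :: z :: (u' ++ y :: u'') ∧ w2 = u ++ z :: x :: (u' ++ y :: u'')

/-- Sylvester congruence: the equivalence relation generated by sylvester adjacency. -/
def SylvCong : List ℕ → List ℕ → Prop := Relation.EqvGen SylvAdj

/-- Standardization of a word: replace the occurrences of the smallest letter,
left to right, by `1, 2, …`, then continue with the next letter, etc. -/
def stdW (w : List ℕ) : List ℕ :=
  (List.range w.length).map (fun i =>
    (((List.range w.length).filter (fun j =>
      w.getD j 0 < w.getD i 0 ∨ (w.getD j 0 = w.getD i 0 ∧ j < i))).length) + 1)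

/-- Partial sums of an evaluation `μ`. -/
def Msum (μ : ℕ → ℕ) (s : ℕ) : ℕ := ∑ t ∈ Finset.range s, μ t

/-- The color (block index) of the vertex `i` for the increasing coloring `ε_μ`. -/
noncomputable def colOf (μ : ℕ → ℕ) (p i : ℕ) : ℕ :=
  ((Finset.range p).filter (fun s => Msum μ (s + 1) < i)).card

/-- `D`, colored by the increasing coloring `ε_μ`, is a simple colored triangulation. -/
def SimpleFor (n p : ℕ) (μ : ℕ → ℕ) (D : Finset (ℕ × ℕ)) : Prop :=
  IsTriangulation n D ∧
  (∀ d ∈ D, 1 ≤ d.1 → d.2 ≤ n → colOf μ p d.1 ≠ colOf μ p d.2) ∧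
  (∀ i t, 1 ≤ i → i + 1 ≤ n → colOf μ p i = colOf μ p (i + 1) →
    FaceOnEdge n D i t → t < i)

/-- Switched flip: a diagonal flip (preserving vertex colors) whose two adjacent
faces (with middle vertices `b` and `c`) have different colors. -/
def SwFlipAdj (n p : ℕ) (μ : ℕ → ℕ) (D D' : Finset (ℕ × ℕ)) : Prop :=
  ∃ a b c d : ℕ, a < b ∧ b < c ∧ c < d ∧ colOf μ p b ≠ colOf μ p c ∧
    ((IsFace n D a b d ∧ IsFace n D b c d ∧ D' = insert (a, c) (D.erase (b, d))) ∨
     (IsFace n D a b c ∧ IsFace n D a c d ∧ D' = insert (b, d) (D.erase (a, c))))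

/-! Reading `φ` backwards: a triangulation of a convex polygon with at least four vertices has an
ear `v`, a vertex lying on no diagonal, that is neither the first nor the last vertex and whose two
neighbours `a < v < b` are joined by a diagonal of the triangulation. Deleting `v` and `(a, b)`
leaves a triangulation of the smaller polygon, and by induction a word for it; prefixing `v`
gives a word for the original triangulation.

To find the ear, take a diagonal `(a, b)` enclosing the fewest vertices. No other diagonal lies
between `a` and `b`, and cutting along `(a, b)` splits the triangulation into noncrossing
families on both sides. Since a noncrossing family of diagonals of a `k`-gon has at most `k - 3`
members (by the same cutting argument), the side between `a` and `b` is a triangle. -/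

section

open Finset

variable {Y : Finset ℕ} {D : Finset (ℕ × ℕ)} {a b v : ℕ} {e : ℕ × ℕ}

/-- A diagonal of the convex polygon whose vertices, in cyclic order, are the elements of `Y` in
increasing order. -/
structure IsDiagonalOf (Y : Finset ℕ) (d : ℕ × ℕ) : Prop where
  fst_mem : d.1 ∈ Y
  snd_mem : d.2 ∈ Y
  inner_nonempty : (Y ∩ Ioo d.1 d.2).Nonempty
  outer_nonempty : (Y \ Icc d.1 d.2).Nonempty

lemma IsDiagonalOf.lt (he : IsDiagonalOf Y e) : e.1 < e.2 := by
  obtain ⟨z, hz⟩ := he.inner_nonempty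
  simp only [mem_inter, mem_Ioo] at hz
  omega

lemma nested_or_outside_of_not_crosses (he : e.1 < e.2) (h : ¬ Crosses (a, b) e) :
    (a ≤ e.1 ∧ e.2 ≤ b) ∨ (e.1 ∉ Ioo a b ∧ e.2 ∉ Ioo a b) := by
  simp only [Crosses, mem_Ioo] at h ⊢
  omega

lemma IsDiagonalOf.inter_Icc (he : IsDiagonalOf Y e) (ha : a ∈ Y) (hb : b ∈ Y)
    (h1 : a ≤ e.1) (h2 : e.2 ≤ b) (hne : e ≠ (a, b)) : IsDiagonalOf (Y ∩ Icc a b) e := by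
  have hlt := he.lt
  obtain ⟨z, hz⟩ := he.inner_nonempty
  simp only [mem_inter, mem_Ioo] at hz
  refine ⟨by simp [he.fst_mem]; omega, by simp [he.snd_mem]; omega, ⟨z, by simp [hz.1]; omega⟩, ?_⟩
  by_cases ha1 : a = e.1
  · have hb2 : e.2 ≠ b := fun hb2 => hne (Prod.ext ha1.symm hb2)
    exact ⟨b, by simp [hb]; omega⟩
  · exact ⟨a, by simp [ha]; omega⟩

lemma IsDiagonalOf.sdiff_Ioo (he : IsDiagonalOf Y e) (ha : a ∈ Y) (hb : b ∈ Y)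
    (h1 : e.1 ∉ Ioo a b) (h2 : e.2 ∉ Ioo a b) (hnest : ¬(a ≤ e.1 ∧ e.2 ≤ b)) :
    IsDiagonalOf (Y \ Ioo a b) e := by
  have hlt := he.lt
  simp only [mem_Ioo] at h1 h2
  obtain ⟨z, hz⟩ := he.inner_nonempty
  obtain ⟨w, hw⟩ := he.outer_nonempty
  simp only [mem_inter, mem_sdiff, mem_Ioo, mem_Icc] at hz hw
  refine ⟨mem_sdiff.2 ⟨he.fst_mem, by simp only [mem_Ioo]; omega⟩,
    mem_sdiff.2 ⟨he.snd_mem, by simp only [mem_Ioo]; omega⟩, ?_, ?_⟩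
  · by_cases hza : a < z ∧ z < b
    · by_cases ha1 : e.1 < a
      · exact ⟨a, by simp [ha]; omega⟩
      · exact ⟨b, by simp [hb]; omega⟩
    · exact ⟨z, by simp [hz.1]; omega⟩
  · by_cases hwa : a < w ∧ w < b
    · by_cases hw1 : w < e.1
      · exact ⟨a, by simp [ha]; omega⟩
      · exact ⟨b, by simp [hb]; omega⟩
    · exact ⟨w, by simp [hw.1]; omega⟩

lemma mem_of_inter_Ioo_eq_singleton (hv : Y ∩ Ioo a b = {v}) : v ∈ Y ∧ a < v ∧ v < b := by
  simpa using (hv ▸ mem_singleton_self v : v ∈ Y ∩ Ioo a b)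

lemma IsDiagonalOf.erase (he : IsDiagonalOf Y e) (ha : a ∈ Y) (hb : b ∈ Y)
    (hv : Y ∩ Ioo a b = {v}) (h1 : e.1 ≠ v) (h2 : e.2 ≠ v) (hne : e ≠ (a, b)) :
    IsDiagonalOf (Y.erase v) e := by
  have hlt := he.lt
  have hvab := mem_of_inter_Ioo_eq_singleton hv
  have honly : ∀ z ∈ Y, ¬(a < z ∧ z < b ∧ z ≠ v) := fun z hz h =>
    h.2.2 (mem_singleton.1 (hv ▸ mem_inter.2 ⟨hz, mem_Ioo.2 ⟨h.1, h.2.1⟩⟩))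
  have he1 := honly _ he.fst_mem
  have he2 := honly _ he.snd_mem
  have hne' : ¬(e.1 = a ∧ e.2 = b) := fun h => hne (Prod.ext h.1 h.2)
  obtain ⟨z, hz⟩ := he.inner_nonempty
  obtain ⟨w, hw⟩ := he.outer_nonempty
  simp only [mem_inter, mem_sdiff, mem_Ioo, mem_Icc] at hz hw
  refine ⟨mem_erase.2 ⟨h1, he.fst_mem⟩, mem_erase.2 ⟨h2, he.snd_mem⟩, ?_, ?_⟩
  · by_cases hzv : z = v
    · by_cases ha1 : e.1 < a
      · exact ⟨a, by simp [ha]; omega⟩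
      · exact ⟨b, by simp [hb]; omega⟩
    · exact ⟨z, by simp [hz.1]; omega⟩
  · by_cases hwv : w = v
    · by_cases hw1 : w < e.1
      · exact ⟨a, by simp [ha]; omega⟩
      · exact ⟨b, by simp [hb]; omega⟩
    · exact ⟨w, by simp [hw.1]; omega⟩

lemma card_inter_Icc (ha : a ∈ Y) (hb : b ∈ Y) (hab : a < b) :
    #(Y ∩ Icc a b) = #(Y ∩ Ioo a b) + 2 := by
  have : Y ∩ Icc a b = insert a (insert b (Y ∩ Ioo a b)) := by
    ext z; simp only [mem_inter, mem_insert, mem_Icc, mem_Ioo]; grind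
  rw [this, card_insert_of_notMem (by simp; omega), card_insert_of_notMem (by simp)]

lemma card_sdiff_Ioo (ha : a ∈ Y) (hb : b ∈ Y) (hab : a < b) :
    #(Y \ Ioo a b) = #(Y \ Icc a b) + 2 := by
  have : Y \ Ioo a b = insert a (insert b (Y \ Icc a b)) := by
    ext z; simp only [mem_sdiff, mem_insert, mem_Icc, mem_Ioo]; grind
  rw [this, card_insert_of_notMem (by simp; omega), card_insert_of_notMem (by simp; omega)]

structure IsPartialTriangulationOf (Y : Finset ℕ) (D : Finset (ℕ × ℕ)) : Prop where
  isDiagonalOf : ∀ d ∈ D, IsDiagonalOf Y d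
  not_crosses : ∀ d ∈ D, ∀ e ∈ D, ¬ Crosses d e

def diagonalsInside (D : Finset (ℕ × ℕ)) (a b : ℕ) : Finset (ℕ × ℕ) :=
  (D.filter fun e => a ≤ e.1 ∧ e.2 ≤ b).erase (a, b)

def diagonalsOutside (D : Finset (ℕ × ℕ)) (a b : ℕ) : Finset (ℕ × ℕ) :=
  D.filter fun e => ¬(a ≤ e.1 ∧ e.2 ≤ b)

lemma card_diagonalsInside_add_card_diagonalsOutside (hab : (a, b) ∈ D) :
    #(diagonalsInside D a b) + 1 + #(diagonalsOutside D a b) = #D := by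
  rw [diagonalsInside, diagonalsOutside, card_erase_add_one (mem_filter.2 ⟨hab, le_rfl, le_rfl⟩),
    card_filter_add_card_filter_not]

lemma IsPartialTriangulationOf.inside (hD : IsPartialTriangulationOf Y D) (hab : (a, b) ∈ D) :
    IsPartialTriangulationOf (Y ∩ Icc a b) (diagonalsInside D a b) := by
  have hsub : diagonalsInside D a b ⊆ D := (erase_subset _ _).trans (filter_subset _ _)
  refine ⟨fun e he => ?_, fun d hd e he => hD.not_crosses d (hsub hd) e (hsub he)⟩
  obtain ⟨hne, he, h1, h2⟩ := by simpa only [diagonalsInside, mem_erase, mem_filter] using he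
  exact (hD.isDiagonalOf e he).inter_Icc (hD.isDiagonalOf _ hab).fst_mem
    (hD.isDiagonalOf _ hab).snd_mem h1 h2 hne

lemma IsPartialTriangulationOf.outside (hD : IsPartialTriangulationOf Y D) (hab : (a, b) ∈ D) :
    IsPartialTriangulationOf (Y \ Ioo a b) (diagonalsOutside D a b) := by
  have hsub : diagonalsOutside D a b ⊆ D := filter_subset _ _
  refine ⟨fun e he => ?_, fun d hd e he => hD.not_crosses d (hsub hd) e (hsub he)⟩
  obtain ⟨he, hnest⟩ := mem_filter.1 he
  have hdiag := hD.isDiagonalOf e he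
  obtain ⟨h1, h2⟩ := (nested_or_outside_of_not_crosses hdiag.lt
    (hD.not_crosses _ hab e he)).resolve_left hnest
  exact hdiag.sdiff_Ioo (hD.isDiagonalOf _ hab).fst_mem (hD.isDiagonalOf _ hab).snd_mem h1 h2 hnest

theorem IsPartialTriangulationOf.card_le (hD : IsPartialTriangulationOf Y D) : #D ≤ #Y - 3 := by
  induction hY : #Y using Nat.strong_induction_on generalizing Y D with
  | _ N ih =>
  rcases D.eq_empty_or_nonempty with rfl | ⟨⟨a, b⟩, hab⟩
  · simp
  have hlt : a < b := (hD.isDiagonalOf _ hab).lt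
  obtain ⟨ha, hb, hinner, houter⟩ := hD.isDiagonalOf _ hab
  dsimp only at ha hb hinner houter
  have hY_in := card_inter_Icc ha hb hlt
  have hY_out := card_sdiff_Ioo ha hb hlt
  have hY_split := card_inter_add_card_sdiff Y (Icc a b)
  have := hinner.card_pos
  have := houter.card_pos
  have hin := ih _ (by omega) (hD.inside hab) rfl
  have hout := ih _ (by omega) (hD.outside hab) rfl
  have := card_diagonalsInside_add_card_diagonalsOutside hab
  omega

structure IsTriangulationOf (Y : Finset ℕ) (D : Finset (ℕ × ℕ)) : Prop
    extends IsPartialTriangulationOf Y D where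
  card_eq : #D = #Y - 3

lemma diagonalsInside_eq_empty_of_forall_card_le (hD : IsPartialTriangulationOf Y D)
    (hmin : ∀ e ∈ D, #(Y ∩ Ioo a b) ≤ #(Y ∩ Ioo e.1 e.2)) : diagonalsInside D a b = ∅ := by
  refine eq_empty_of_forall_notMem fun e he => ?_
  obtain ⟨hne, he, h1, h2⟩ := by simpa only [diagonalsInside, mem_erase, mem_filter] using he
  have hlt := (hD.isDiagonalOf e he).lt
  have hne' : ¬(e.1 = a ∧ e.2 = b) := fun h => hne (Prod.ext h.1 h.2)
  have hssub : Y ∩ Ioo e.1 e.2 ⊂ Y ∩ Ioo a b := by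
    refine ssubset_iff_of_subset (fun z hz => ?_) |>.2 ?_
    · simp only [mem_inter, mem_Ioo] at hz ⊢; exact ⟨hz.1, by omega, by omega⟩
    · by_cases ha1 : a < e.1
      · exact ⟨e.1, by simp [(hD.isDiagonalOf e he).fst_mem]; omega, by simp⟩
      · exact ⟨e.2, by simp [(hD.isDiagonalOf e he).snd_mem]; omega, by simp⟩
  exact (card_lt_card hssub).not_ge (hmin e he)

theorem IsTriangulationOf.exists_ear (hD : IsTriangulationOf Y D) (hY : 4 ≤ #Y) :
    ∃ a v b, (a, b) ∈ D ∧ Y ∩ Ioo a b = {v} ∧ ∀ e ∈ D, e.1 ≠ v ∧ e.2 ≠ v := by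
  obtain ⟨⟨a, b⟩, hab, hmin⟩ := D.exists_min_image (fun d => #(Y ∩ Ioo d.1 d.2))
    (card_pos.1 (by have := hD.card_eq; omega))
  have hlt : a < b := (hD.isDiagonalOf _ hab).lt
  obtain ⟨ha, hb, hinner, houter⟩ := hD.isDiagonalOf _ hab
  dsimp only at ha hb hinner houter hmin
  have hempty := diagonalsInside_eq_empty_of_forall_card_le hD.toIsPartialTriangulationOf hmin
  obtain ⟨v, hv⟩ : ∃ v, Y ∩ Ioo a b = {v} := by
    have hsplit := card_diagonalsInside_add_card_diagonalsOutside hab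
    rw [hempty, card_empty] at hsplit
    have := (hD.outside hab).card_le
    have := card_sdiff_Ioo ha hb hlt
    have := card_inter_add_card_sdiff Y (Icc a b)
    have := card_inter_Icc ha hb hlt
    have := hinner.card_pos
    have := houter.card_pos
    have := hD.card_eq
    exact card_eq_one.1 (show #(Y ∩ Ioo a b) = 1 by omega)
  refine ⟨a, v, b, hab, hv, fun e he => ?_⟩
  have hvab := mem_of_inter_Ioo_eq_singleton hv
  rcases nested_or_outside_of_not_crosses (hD.isDiagonalOf e he).lt (hD.not_crosses _ hab e he)
    with ⟨h1, h2⟩ | ⟨h1, h2⟩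
  · have heq : e = (a, b) := by
      by_contra hne
      exact notMem_empty e (hempty ▸ mem_erase.2 ⟨hne, mem_filter.2 ⟨he, h1, h2⟩⟩)
    subst heq
    exact ⟨hvab.2.1.ne, hvab.2.2.ne'⟩
  · simp only [mem_Ioo] at h1 h2
    omega

theorem IsTriangulationOf.erase_ear (hD : IsTriangulationOf Y D) (hab : (a, b) ∈ D)
    (hv : Y ∩ Ioo a b = {v}) (hear : ∀ e ∈ D, e.1 ≠ v ∧ e.2 ≠ v) :
    IsTriangulationOf (Y.erase v) (D.erase (a, b)) := by
  have hvY := (mem_of_inter_Ioo_eq_singleton hv).1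
  obtain ⟨ha, hb, -, -⟩ := hD.isDiagonalOf _ hab
  refine ⟨⟨fun e he => ?_, fun d hd e he => hD.not_crosses d (mem_of_mem_erase hd) e
    (mem_of_mem_erase he)⟩, ?_⟩
  · obtain ⟨hne, he⟩ := mem_erase.1 he
    exact (hD.isDiagonalOf e he).erase ha hb hv (hear e he).1 (hear e he).2 hne
  · have := hD.card_eq
    have := card_pos.2 ⟨_, hab⟩
    rw [card_erase_of_mem hab, card_erase_of_mem hvY]
    omega

def innerVertices (Y : Finset ℕ) : Finset ℕ :=
  Y.filter fun v => (∃ a ∈ Y, a < v) ∧ ∃ b ∈ Y, v < b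

lemma card_innerVertices (Y : Finset ℕ) : #(innerVertices Y) = #Y - 2 := by
  by_cases hY : 1 < #Y
  · have hne : Y.Nonempty := card_pos.1 (by omega)
    have heq : innerVertices Y = (Y.erase (Y.min' hne)).erase (Y.max' hne) := by
      ext v
      simp only [innerVertices, mem_filter, mem_erase]
      constructor
      · rintro ⟨hv, ⟨a, ha, hav⟩, b, hb, hvb⟩
        exact ⟨(hvb.trans_le (le_max' _ _ hb)).ne, ((min'_le _ _ ha).trans_lt hav).ne', hv⟩
      · rintro ⟨hM, hm, hv⟩
        exact ⟨hv, ⟨_, min'_mem _ _, (min'_le _ _ hv).lt_of_ne' hm⟩,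
          _, max'_mem _ _, (le_max' _ _ hv).lt_of_ne hM⟩
    rw [heq, card_erase_of_mem (mem_erase.2 ⟨(min'_lt_max'_of_card Y hY).ne', max'_mem _ _⟩),
      card_erase_of_mem (min'_mem _ _)]
    rfl
  · have : innerVertices Y = ∅ := eq_empty_of_forall_notMem fun v hv => by
      obtain ⟨hv, ⟨a, ha, hav⟩, -⟩ := mem_filter.1 hv
      exact hY (one_lt_card.2 ⟨a, ha, v, hv, hav.ne⟩)
    rw [this, card_empty]
    omega

lemma insert_innerVertices_erase (hv : v ∈ innerVertices Y) :
    insert v (innerVertices (Y.erase v)) = innerVertices Y := by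
  obtain ⟨-, ⟨a, ha, hav⟩, b, hb, hvb⟩ := mem_filter.1 hv
  ext w
  simp only [innerVertices, mem_insert, mem_filter, mem_erase] at hv ⊢
  grind

lemma predIn_eq_of_inter_Ioo (ha : a ∈ Y) (hv : Y ∩ Ioo a b = {v}) : predIn Y v = a := by
  have hvab := mem_of_inter_Ioo_eq_singleton hv
  have hmax : (Y.filter (· < v)).max = a := by
    refine le_antisymm (Finset.max_le fun z hz => ?_) (le_max (mem_filter.2 ⟨ha, hvab.2.1⟩))
    obtain ⟨hz, hzv⟩ := mem_filter.1 hz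
    by_contra! haz
    have : z ∈ Y ∩ Ioo a b := mem_inter.2 ⟨hz, mem_Ioo.2 ⟨WithBot.coe_lt_coe.1 haz, by omega⟩⟩
    rw [hv, mem_singleton] at this
    omega
  rw [predIn, hmax]
  rfl

lemma succIn_eq_of_inter_Ioo (hb : b ∈ Y) (hv : Y ∩ Ioo a b = {v}) : succIn Y v = b := by
  have hvab := mem_of_inter_Ioo_eq_singleton hv
  have hmin : (Y.filter (v < ·)).min = b := by
    refine le_antisymm (min_le (mem_filter.2 ⟨hb, hvab.2.2⟩)) (Finset.le_min fun z hz => ?_)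
    obtain ⟨hz, hvz⟩ := mem_filter.1 hz
    by_contra! hzb
    have : z ∈ Y ∩ Ioo a b := mem_inter.2 ⟨hz, mem_Ioo.2 ⟨by omega, WithTop.coe_lt_coe.1 hzb⟩⟩
    rw [hv, mem_singleton] at this
    omega
  rw [succIn, hmin]
  rfl

lemma phiAux_of_length_le_one {l : List ℕ} (hl : l.length ≤ 1) (Y : Finset ℕ) :
    phiAux l Y = ∅ := by
  match l, hl with
  | [], _ => rfl
  | [_], _ => rfl

lemma phiAux_cons_of_ne_nil {l : List ℕ} (hl : l ≠ []) (v : ℕ) (Y : Finset ℕ) :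
    phiAux (v :: l) Y = insert (predIn Y v, succIn Y v) (phiAux l (Y.erase v)) := by
  obtain ⟨w, t, rfl⟩ := List.exists_cons_of_ne_nil hl
  rfl

theorem IsTriangulationOf.exists_phiAux_eq (hD : IsTriangulationOf Y D) :
    ∃ l : List ℕ, l.Nodup ∧ l.toFinset = innerVertices Y ∧ phiAux l Y = D := by
  induction hY : #Y using Nat.strong_induction_on generalizing Y D with
  | _ N ih =>
  rcases lt_or_ge #Y 4 with h4 | h4
  · have hD0 : D = ∅ := card_eq_zero.1 (by have := hD.card_eq; omega)
    have hlen : (innerVertices Y).toList.length ≤ 1 := by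
      rw [length_toList, card_innerVertices]
      omega
    exact ⟨_, nodup_toList _, toList_toFinset _, hD0 ▸ phiAux_of_length_le_one hlen Y⟩
  obtain ⟨a, v, b, hab, hv, hear⟩ := hD.exists_ear h4
  obtain ⟨ha, hb, -, -⟩ := hD.isDiagonalOf _ hab
  obtain ⟨hvY, hav, hvb⟩ := mem_of_inter_Ioo_eq_singleton hv
  have hvI : v ∈ innerVertices Y := mem_filter.2 ⟨hvY, ⟨a, ha, hav⟩, b, hb, hvb⟩
  obtain ⟨l, hnd, hl, hphi⟩ := ih _ (by rw [card_erase_of_mem hvY]; omega)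
    (hD.erase_ear hab hv hear) rfl
  have hl_ne : l ≠ [] := by
    rintro rfl
    have := card_innerVertices (Y.erase v)
    rw [← hl, card_erase_of_mem hvY] at this
    simp only [List.toFinset_nil, card_empty] at this
    omega
  have hvl : v ∉ l := fun h => by
    have : v ∈ innerVertices (Y.erase v) := hl ▸ List.mem_toFinset.2 h
    simp [innerVertices] at this
  refine ⟨v :: l, List.nodup_cons.2 ⟨hvl, hnd⟩, ?_, ?_⟩
  · rw [List.toFinset_cons, hl, insert_innerVertices_erase hvI]
  · rw [phiAux_cons_of_ne_nil hl_ne, predIn_eq_of_inter_Ioo ha hv, succIn_eq_of_inter_Ioo hb hv,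
      hphi, insert_erase hab]

lemma innerVertices_range (n : ℕ) : innerVertices (range (n + 2)) = Icc 1 n := by
  ext v
  simp only [innerVertices, mem_filter, mem_range, mem_Icc]
  constructor
  · rintro ⟨hv, ⟨a, -, hav⟩, b, hb, hvb⟩
    omega
  · rintro ⟨h1, h2⟩
    exact ⟨by omega, ⟨0, by omega, by omega⟩, n + 1, by omega, by omega⟩

lemma IsTriangulation.isTriangulationOf_range {n : ℕ} (hD : IsTriangulation n D) :
    IsTriangulationOf (range (n + 2)) D := by
  obtain ⟨hdiag, hnc, hcard⟩ := hD
  refine ⟨⟨fun d hd => ?_, hnc⟩, by rw [card_range]; omega⟩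
  obtain ⟨h1, h2, h3, h4⟩ := hdiag d hd
  refine ⟨by simp; omega, by simp; omega, ⟨d.1 + 1, by simp; omega⟩, ?_⟩
  by_cases hd1 : d.1 = 0
  · exact ⟨n + 1, by simp; omega⟩
  · exact ⟨0, by simp; omega⟩

end

/-- The map `φ` from permutations of `{x_1 < … < x_n}` to triangulations of the
`(n+2)`-gon is surjective. -/
theorem stmt4 (n : ℕ) (D : Finset (ℕ × ℕ)) (hD : IsTriangulation n D) :
    ∃ l : List ℕ, l.Perm ((List.range n).map (· + 1)) ∧ phiT n l = D := by
  obtain ⟨l, hnd, hl, hphi⟩ := hD.isTriangulationOf_range.exists_phiAux_eq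
  refine ⟨l, List.perm_of_nodup_nodup_toFinset_eq hnd
    (List.nodup_range.map (add_left_injective 1)) ?_, hphi⟩
  rw [hl, innerVertices_range]
  ext v
  simp only [Finset.mem_Icc, List.mem_toFinset, List.mem_map, List.mem_range]
  constructor
  · intro h
    exact ⟨v - 1, by omega, by omega⟩
  · rintro ⟨i, hi, rfl⟩
    omega
end

section
/- Let σ be a permutation of X = {x_1 < ... < x_n} with triangulation T = φ(σ), and let t_i denote the third vertex of the face of T containing edge {x_i, x_{i+1}}. If the letters x_i, x_{i+1}, ..., x_j (with j ≥ i+2) appear in increasing order when σ is read left to right, then t_{j-1} ≤ t_{j-2} ≤ ... ≤ t_i < x_i. -/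
open scoped Classical

/-!
When a letter `v` is read, `φ` joins the two current neighbours of `v` and deletes `v`; at that
moment every vertex strictly between those neighbours has already been deleted except `v`, and
the neighbours themselves are still present. Hence every vertex strictly inside an edge of
`φ(σ)` is a letter read before both endpoints of the edge.

Now let `x_k` precede `x_{k+1}` in `σ`. If `t_k > x_{k+1}`, the edge `{x_k, t_k}` would put
`x_{k+1}` before `x_k`; so `t_k < x_k`. If moreover `x_{k+1}` precedes `x_{k+2}` and
`t_k < t_{k+1}`, the edge `{t_{k+1}, x_{k+2}}` puts `x_{k+1}` before `t_{k+1}`, which rules out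
`t_{k+1} = x_k`, while otherwise `t_k < t_{k+1} < x_{k+1}` and the edge `{t_k, x_{k+1}}` puts
`t_{k+1}` before `x_{k+1}`.
-/

section NeighborsIn

variable {Y : Finset ℕ} {v w : ℕ}

lemma predIn_eq_max' (hne : (Y.filter (· < v)).Nonempty) :
    predIn Y v = (Y.filter (· < v)).max' hne := by
  rw [predIn, ← Finset.coe_max' hne]
  rfl

lemma succIn_eq_min' (hne : (Y.filter (v < ·)).Nonempty) :
    succIn Y v = (Y.filter (v < ·)).min' hne := by
  rw [succIn, ← Finset.coe_min' hne]
  rfl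

lemma predIn_mem_of_lt (hw : w ∈ Y) (hwv : w < v) : predIn Y v ∈ Y ∧ predIn Y v < v := by
  have hne : (Y.filter (· < v)).Nonempty := ⟨w, Finset.mem_filter.mpr ⟨hw, hwv⟩⟩
  rw [predIn_eq_max' hne]
  exact Finset.mem_filter.mp (Finset.max'_mem _ hne)

lemma le_predIn (hw : w ∈ Y) (hwv : w < v) : w ≤ predIn Y v := by
  have hwf : w ∈ Y.filter (· < v) := Finset.mem_filter.mpr ⟨hw, hwv⟩
  rw [predIn_eq_max' ⟨w, hwf⟩]
  exact Finset.le_max' _ w hwf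

lemma succIn_mem_of_lt (hw : w ∈ Y) (hvw : v < w) : succIn Y v ∈ Y ∧ v < succIn Y v := by
  have hne : (Y.filter (v < ·)).Nonempty := ⟨w, Finset.mem_filter.mpr ⟨hw, hvw⟩⟩
  rw [succIn_eq_min' hne]
  exact Finset.mem_filter.mp (Finset.min'_mem _ hne)

lemma succIn_le (hw : w ∈ Y) (hvw : v < w) : succIn Y v ≤ w := by
  have hwf : w ∈ Y.filter (v < ·) := Finset.mem_filter.mpr ⟨hw, hvw⟩
  rw [succIn_eq_min' ⟨w, hwf⟩]
  exact Finset.min'_le _ w hwf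

lemma eq_of_predIn_lt_of_lt_succIn (hw : w ∈ Y) (h₁ : predIn Y v < w) (h₂ : w < succIn Y v) :
    w = v := by
  rcases lt_trichotomy w v with h | h | h
  · exact absurd (le_predIn hw h) h₁.not_ge
  · exact h
  · exact absurd (succIn_le hw h) h₂.not_ge

end NeighborsIn

lemma mem_phiAux_cons {v : ℕ} {rest : List ℕ} {Y : Finset ℕ} {d : ℕ × ℕ}
    (h : d ∈ phiAux (v :: rest) Y) :
    d = (predIn Y v, succIn Y v) ∨ d ∈ phiAux rest (Y.erase v) := by
  cases rest with
  | nil => simp [phiAux] at h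
  | cons => exact Finset.mem_insert.mp h

section PhiAux

variable {M a b : ℕ} {l : List ℕ} {Y : Finset ℕ}

lemma mem_of_mem_phiAux (hl : ∀ u ∈ l, 0 < u ∧ u < M) (h0 : 0 ∈ Y) (hM : M ∈ Y)
    (hab : (a, b) ∈ phiAux l Y) : a ∈ Y ∧ b ∈ Y := by
  induction l generalizing Y with
  | nil => simp [phiAux] at hab
  | cons v rest ih =>
    obtain ⟨hv0, hvM⟩ := hl v List.mem_cons_self
    rcases mem_phiAux_cons hab with h | h
    · obtain ⟨rfl, rfl⟩ := Prod.mk.inj h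
      exact ⟨(predIn_mem_of_lt h0 hv0).1, (succIn_mem_of_lt hM hvM).1⟩
    · have hY := ih (fun u hu => hl u (List.mem_cons_of_mem _ hu))
        (Finset.mem_erase.mpr ⟨hv0.ne, h0⟩) (Finset.mem_erase.mpr ⟨hvM.ne', hM⟩) h
      exact ⟨Finset.mem_of_mem_erase hY.1, Finset.mem_of_mem_erase hY.2⟩

lemma idxOf_lt_of_mem_phiAux (hl : ∀ u ∈ l, 0 < u ∧ u < M) (h0 : 0 ∈ Y) (hM : M ∈ Y)
    (hab : (a, b) ∈ phiAux l Y) {w : ℕ} (hw : w ∈ Y) (haw : a < w) (hwb : w < b) :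
    l.idxOf w < l.idxOf a ∧ l.idxOf w < l.idxOf b := by
  induction l generalizing Y with
  | nil => simp [phiAux] at hab
  | cons v rest ih =>
    obtain ⟨hv0, hvM⟩ := hl v List.mem_cons_self
    have hl' : ∀ u ∈ rest, 0 < u ∧ u < M := fun u hu => hl u (List.mem_cons_of_mem _ hu)
    rcases mem_phiAux_cons hab with h | h
    · obtain ⟨rfl, rfl⟩ := Prod.mk.inj h
      obtain rfl := eq_of_predIn_lt_of_lt_succIn hw haw hwb
      rw [List.idxOf_cons_self, List.idxOf_cons_ne _ haw.ne', List.idxOf_cons_ne _ hwb.ne]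
      omega
    · have h0' : 0 ∈ Y.erase v := Finset.mem_erase.mpr ⟨hv0.ne, h0⟩
      have hM' : M ∈ Y.erase v := Finset.mem_erase.mpr ⟨hvM.ne', hM⟩
      obtain ⟨ha, hb⟩ := mem_of_mem_phiAux hl' h0' hM' h
      rw [List.idxOf_cons_ne _ (Finset.ne_of_mem_erase ha).symm,
        List.idxOf_cons_ne _ (Finset.ne_of_mem_erase hb).symm]
      by_cases hwv : w = v
      · subst hwv
        rw [List.idxOf_cons_self]
        omega
      · rw [List.idxOf_cons_ne _ (Ne.symm hwv)]
        have hrest := ih hl' h0' hM' h (Finset.mem_erase.mpr ⟨hwv, hw⟩)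
        omega

end PhiAux

lemma mem_iff_of_perm_range_succ {n : ℕ} {l : List ℕ}
    (hl : l.Perm ((List.range n).map (· + 1))) (u : ℕ) : u ∈ l ↔ 0 < u ∧ u ≤ n := by
  rw [hl.mem_iff, List.mem_map]
  constructor
  · rintro ⟨x, hx, rfl⟩
    simp only [List.mem_range] at hx
    omega
  · rintro ⟨h0, hn⟩
    exact ⟨u - 1, List.mem_range.mpr (by omega), by omega⟩

section PhiT

variable {n : ℕ} {l : List ℕ}

lemma idxOf_lt_of_isEdge_phiT (hl : ∀ u, u ∈ l ↔ 0 < u ∧ u ≤ n) {a b w : ℕ}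
    (he : IsEdge n (phiT n l) a b) (haw : a < w) (hwb : w < b) :
    l.idxOf w < l.idxOf a ∧ l.idxOf w < l.idxOf b := by
  obtain ⟨-, hbn, hside | ⟨rfl, rfl⟩ | hd⟩ := he
  · omega
  · have hwl : w ∈ l := (hl w).mpr ⟨haw, by omega⟩
    have h0 : 0 ∉ l := by simp [hl]
    have hn : n + 1 ∉ l := by simp [hl]
    rw [List.idxOf_eq_length h0, List.idxOf_eq_length hn]
    exact ⟨List.idxOf_lt_length_of_mem hwl, List.idxOf_lt_length_of_mem hwl⟩
  · exact idxOf_lt_of_mem_phiAux (M := n + 1) (fun u hu => by have hu' := (hl u).mp hu; omega)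
      (by simp) (by simp) hd (Finset.mem_range.mpr (by omega)) haw hwb

lemma isFace_phiT_of_faceOnEdge (hl : ∀ u, u ∈ l ↔ 0 < u ∧ u ≤ n) {k t : ℕ}
    (hk : l.idxOf k < l.idxOf (k + 1)) (hf : FaceOnEdge n (phiT n l) k t) :
    IsFace n (phiT n l) t k (k + 1) := by
  rcases hf with ⟨-, hf⟩ | ⟨hkt, -, -, -, -, hedge⟩
  · exact hf
  · have hbefore := (idxOf_lt_of_isEdge_phiT hl hedge (lt_add_one k) hkt).1
    omega

lemma le_of_isFace_phiT_succ (hl : ∀ u, u ∈ l ↔ 0 < u ∧ u ≤ n) {k t₁ t₂ : ℕ}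
    (hk : l.idxOf k < l.idxOf (k + 1)) (hf₁ : IsFace n (phiT n l) t₁ k (k + 1))
    (hf₂ : IsFace n (phiT n l) t₂ (k + 1) (k + 2)) : t₂ ≤ t₁ := by
  by_contra! ht
  have hsucc_first := (idxOf_lt_of_isEdge_phiT hl hf₂.2.2.2.2 hf₂.1 (lt_add_one _)).1
  rcases (Nat.lt_succ_iff.mp hf₂.1).eq_or_lt with rfl | ht₂
  · omega
  · have ht₂_first :=
      (idxOf_lt_of_isEdge_phiT hl hf₁.2.2.2.2 ht (ht₂.trans (lt_add_one k))).2
    omega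

end PhiT

theorem stmt6_general (n : ℕ) (l : List ℕ) (hl : l.Perm ((List.range n).map (· + 1)))
    (i j : ℕ) (hij : i + 2 ≤ j)
    (hinc : ∀ k, i ≤ k → k < j → l.idxOf k < l.idxOf (k + 1))
    (t : ℕ → ℕ)
    (htf : ∀ k, i ≤ k → k < j → FaceOnEdge n (phiT n l) k (t k)) :
    (∀ k, i ≤ k → k + 1 < j → t (k + 1) ≤ t k) ∧ t i < i := by
  have hmem := mem_iff_of_perm_range_succ hl
  have hface : ∀ k, i ≤ k → k < j → IsFace n (phiT n l) (t k) k (k + 1) := fun k hik hkj =>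
    isFace_phiT_of_faceOnEdge hmem (hinc k hik hkj) (htf k hik hkj)
  refine ⟨fun k hik hkj => ?_, (hface i le_rfl (by omega)).1⟩
  exact le_of_isFace_phiT_succ hmem (hinc k hik (by omega)) (hface k hik (by omega))
    (hface (k + 1) (by omega) hkj)

/-- If the letters `x_i, x_{i+1}, …, x_j` (with `j ≥ i+2`) appear in increasing
order in `σ` read left to right, then `t_{j-1} ≤ t_{j-2} ≤ … ≤ t_i < x_i`. -/
theorem stmt6 (n : ℕ) (l : List ℕ) (hl : l.Perm ((List.range n).map (· + 1)))
    (i j : ℕ) (hi1 : 1 ≤ i) (hij : i + 2 ≤ j) (hj : j ≤ n)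
    (hinc : ∀ k, i ≤ k → k < j → l.idxOf k < l.idxOf (k + 1))
    (t : ℕ → ℕ)
    (htf : ∀ k, i ≤ k → k < j → FaceOnEdge n (phiT n l) k (t k)) :
    (∀ k, i ≤ k → k + 1 < j → t (k + 1) ≤ t k) ∧ t i < i :=
  stmt6_general n l hl i j hij hinc t htf
end

section
/- The number of sylvester congruence classes of permutations in S_n equals the Catalan number c_n = (1/(n+1)) * binomial(2n, n). -/
/-!
Insert the letters of a word from right to left into a binary search tree, letters `≤` the root
going left. A sylvester move `x z ↦ z x` followed later by a letter `y` with `x ≤ y < z` does not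
change the tree: `y` is inserted first and then separates `x` from `z`. Conversely, every word is
congruent to the postorder reading of its tree (move each large letter right past the small ones),
so sylvester classes are exactly the fibres of insertion. For a permutation of `1, …, n` the
in-order reading of the tree is `1, …, n`, so the tree is determined by its shape, and every shape
occurs: the classes correspond to binary trees with `n` nodes, counted by the Catalan numbers.
-/

open scoped Classical

namespace BinaryTree

variable {α : Type*}

def inorder : BinaryTree α → List α
  | nil => []
  | node a l r => l.inorder ++ a :: r.inorder

def postorder : BinaryTree α → List α
  | nil => []
  | node a l r => l.postorder ++ r.postorder ++ [a]

def shape (t : BinaryTree α) : BinaryTree Unit := t.map fun _ => ()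

@[simp]
theorem shape_nil : (nil : BinaryTree α).shape = nil := rfl

@[simp]
theorem shape_node (a : α) (l r : BinaryTree α) :
    (node a l r).shape = node () l.shape r.shape := rfl

theorem length_inorder : ∀ t : BinaryTree α, t.inorder.length = t.numNodes
  | nil => rfl
  | node a l r => by
      simp only [inorder, List.length_append, List.length_cons, length_inorder l,
        length_inorder r, numNodes]
      omega

theorem numNodes_shape : ∀ t : BinaryTree α, t.shape.numNodes = t.numNodes
  | nil => rfl
  | node a l r => by simp [numNodes, numNodes_shape l, numNodes_shape r]

theorem postorder_perm_inorder : ∀ t : BinaryTree α, t.postorder.Perm t.inorder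
  | nil => .rfl
  | node a l r => by
      simp only [postorder, inorder, List.append_assoc]
      exact (postorder_perm_inorder l).append
        (((postorder_perm_inorder r).append_right [a]).trans (by simp))

theorem eq_of_shape_eq_of_inorder_eq :
    ∀ {t t' : BinaryTree α}, t.shape = t'.shape → t.inorder = t'.inorder → t = t'
  | nil, nil, _, _ => rfl
  | node _ _ _, nil, h, _ | nil, node _ _ _, h, _ => by simp at h
  | node a l r, node a' l' r', hs, hi => by
      obtain ⟨hl, hr⟩ : l.shape = l'.shape ∧ r.shape = r'.shape := by simpa using hs
      have hlen : l.inorder.length = l'.inorder.length := by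
        rw [length_inorder, length_inorder, ← numNodes_shape, ← numNodes_shape l', hl]
      obtain ⟨hil, rfl, hir⟩ : l.inorder = l'.inorder ∧ a = a' ∧ r.inorder = r'.inorder := by
        simpa using List.append_inj hi hlen
      rw [eq_of_shape_eq_of_inorder_eq hl hil, eq_of_shape_eq_of_inorder_eq hr hir]

section SearchTree

variable [LinearOrder α]

def bstInsert (x : α) : BinaryTree α → BinaryTree α
  | nil => node x nil nil
  | node a l r => if x ≤ a then node a (bstInsert x l) r else node a l (bstInsert x r)

def IsBST : BinaryTree α → Prop
  | nil => True
  | node a l r => (∀ y ∈ l.inorder, y ≤ a) ∧ (∀ y ∈ r.inorder, a < y) ∧ l.IsBST ∧ r.IsBST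

theorem inorder_bstInsert_perm (x : α) :
    ∀ t : BinaryTree α, (t.bstInsert x).inorder.Perm (x :: t.inorder)
  | nil => .rfl
  | node a l r => by
      unfold bstInsert
      split_ifs
      · exact (inorder_bstInsert_perm x l).append_right _
      · exact (((inorder_bstInsert_perm x r).cons a).append_left _).trans
          ((List.Perm.swap x a _).append_left _ |>.trans List.perm_middle)

theorem mem_inorder_bstInsert {x y : α} {t : BinaryTree α} :
    y ∈ (t.bstInsert x).inorder ↔ y = x ∨ y ∈ t.inorder :=
  (inorder_bstInsert_perm x t).mem_iff.trans List.mem_cons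

theorem IsBST.bstInsert (x : α) : ∀ {t : BinaryTree α}, t.IsBST → (t.bstInsert x).IsBST
  | nil, _ => by simp [BinaryTree.bstInsert, IsBST, inorder]
  | node a l r, ⟨hl, hr, hbl, hbr⟩ => by
      unfold BinaryTree.bstInsert
      split_ifs with hxa
      · refine ⟨fun y hy => ?_, hr, hbl.bstInsert x, hbr⟩
        rcases mem_inorder_bstInsert.1 hy with rfl | hy
        exacts [hxa, hl y hy]
      · refine ⟨hl, fun y hy => ?_, hbl, hbr.bstInsert x⟩
        rcases mem_inorder_bstInsert.1 hy with rfl | hy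
        exacts [not_le.1 hxa, hr y hy]

theorem IsBST.inorder_pairwise : ∀ {t : BinaryTree α}, t.IsBST → t.inorder.Pairwise (· ≤ ·)
  | nil, _ => .nil
  | node a l r, ⟨hl, hr, hbl, hbr⟩ => by
      refine List.pairwise_append.2 ⟨hbl.inorder_pairwise,
        List.pairwise_cons.2 ⟨fun y hy => (hr y hy).le, hbr.inorder_pairwise⟩, ?_⟩
      intro x hx y hy
      rcases List.mem_cons.1 hy with rfl | hy
      exacts [hl x hx, (hl x hx).trans (hr y hy).le]

/-- Two letters `x ≤ y < z` are separated by `y` on their way down, so they commute. -/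
theorem bstInsert_bstInsert_comm {x y z : α} (hxy : x ≤ y) (hyz : y < z) :
    ∀ {t : BinaryTree α}, t.IsBST → y ∈ t.inorder →
      (t.bstInsert z).bstInsert x = (t.bstInsert x).bstInsert z
  | nil, _, hy => by simp [inorder] at hy
  | node a l r, ⟨hl, hr, hbl, hbr⟩, hy => by
      have hy' : y ∈ l.inorder ∨ y = a ∨ y ∈ r.inorder := by simpa [inorder] using hy
      by_cases hza : z ≤ a
      · have hyl : y ∈ l.inorder := by
          rcases hy' with hy | rfl | hy
          exacts [hy, absurd hza (not_le.2 hyz), absurd (hr y hy) (by order)]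
        simp [BinaryTree.bstInsert, hza, hxy.trans (hyz.trans_le hza).le,
          bstInsert_bstInsert_comm hxy hyz hbl hyl]
      · by_cases hxa : x ≤ a
        · simp [BinaryTree.bstInsert, hza, hxa]
        · have hyr : y ∈ r.inorder := by
            rcases hy' with hy | rfl | hy
            exacts [absurd (hl y hy) (by order), absurd hxy hxa, hy]
          simp [BinaryTree.bstInsert, hza, hxa, bstInsert_bstInsert_comm hxy hyz hbr hyr]

end SearchTree

end BinaryTree

open BinaryTree

section SylvesterTree

variable {α : Type*} [LinearOrder α]

def sylvesterTree (w : List α) : BinaryTree α := w.foldr bstInsert nil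

@[simp]
theorem sylvesterTree_cons (x : α) (w : List α) :
    sylvesterTree (x :: w) = (sylvesterTree w).bstInsert x := rfl

theorem inorder_sylvesterTree_perm : ∀ w : List α, (sylvesterTree w).inorder.Perm w
  | [] => .rfl
  | x :: w => (inorder_bstInsert_perm x _).trans ((inorder_sylvesterTree_perm w).cons x)

theorem isBST_sylvesterTree : ∀ w : List α, (sylvesterTree w).IsBST
  | [] => trivial
  | x :: w => (isBST_sylvesterTree w).bstInsert x

theorem sylvesterTree_append_singleton (a : α) : ∀ w : List α,
    sylvesterTree (w ++ [a]) =
      node a (sylvesterTree (w.filter (· ≤ a))) (sylvesterTree (w.filter (a < ·)))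
  | [] => rfl
  | b :: w => by
      by_cases hba : b ≤ a
      · simp [sylvesterTree_append_singleton a w, bstInsert, hba]
      · simp [sylvesterTree_append_singleton a w, bstInsert, hba, not_le.1 hba]

theorem sylvesterTree_postorder : ∀ {t : BinaryTree α}, t.IsBST → sylvesterTree t.postorder = t
  | nil, _ => rfl
  | node a l r, ⟨hl, hr, hbl, hbr⟩ => by
      have hl' : ∀ y ∈ l.postorder, y ≤ a := fun y hy =>
        hl y ((postorder_perm_inorder l).subset hy)
      have hr' : ∀ y ∈ r.postorder, a < y := fun y hy =>
        hr y ((postorder_perm_inorder r).subset hy)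
      rw [postorder, sylvesterTree_append_singleton, List.filter_append, List.filter_append,
        List.filter_eq_self.2 (by simpa using hl'), List.filter_eq_nil_iff.2 (by simpa using hr'),
        List.filter_eq_nil_iff.2 (fun y hy => by simpa using hl' y hy),
        List.filter_eq_self.2 (by simpa using hr'), List.append_nil, List.nil_append,
        sylvesterTree_postorder hbl, sylvesterTree_postorder hbr]

/-- Both in-order readings are the sorted word. -/
theorem sylvesterTree_eq_of_perm_of_shape_eq {w w' : List α} (hp : w.Perm w')
    (hs : (sylvesterTree w).shape = (sylvesterTree w').shape) :
    sylvesterTree w = sylvesterTree w' :=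
  eq_of_shape_eq_of_inorder_eq hs <|
    ((inorder_sylvesterTree_perm w).trans
      (hp.trans (inorder_sylvesterTree_perm w').symm)).eq_of_pairwise'
      (isBST_sylvesterTree w).inorder_pairwise (isBST_sylvesterTree w').inorder_pairwise

end SylvesterTree

def labelInorder : BinaryTree Unit → ℕ → BinaryTree ℕ
  | nil, _ => nil
  | node _ l r, k => node (k + l.numNodes) (labelInorder l k) (labelInorder r (k + l.numNodes + 1))

theorem shape_labelInorder : ∀ (t : BinaryTree Unit) (k : ℕ), (labelInorder t k).shape = t
  | nil, _ => rfl
  | node () l r, k => by simp [labelInorder, shape_labelInorder l, shape_labelInorder r]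

theorem inorder_labelInorder :
    ∀ (t : BinaryTree Unit) (k : ℕ), (labelInorder t k).inorder = List.range' k t.numNodes
  | nil, _ => rfl
  | node () l r, k => by
      rw [labelInorder, inorder, inorder_labelInorder l, inorder_labelInorder r, numNodes,
        ← List.range'_succ, List.range'_append_1, Nat.add_assoc]

theorem isBST_labelInorder : ∀ (t : BinaryTree Unit) (k : ℕ), (labelInorder t k).IsBST
  | nil, _ => trivial
  | node () l r, k => by
      refine ⟨fun y hy => ?_, fun y hy => ?_, isBST_labelInorder l _, isBST_labelInorder r _⟩ <;>
      · rw [inorder_labelInorder, List.mem_range'_1] at hy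
        omega

namespace Relation.EqvGen

variable {α β : Type*} {r : α → α → Prop}

theorem map {s : β → β → Prop} (f : α → β) (hf : ∀ a b, r a b → s (f a) (f b)) {a b : α}
    (h : EqvGen r a b) : EqvGen s (f a) (f b) := by
  induction h with
  | rel x y hxy => exact .rel _ _ (hf x y hxy)
  | refl x => exact .refl _
  | symm x y _ ih => exact .symm _ _ ih
  | trans x y z _ _ ih₁ ih₂ => exact .trans _ _ _ ih₁ ih₂

theorem restrict {p : α → Prop} (hp : ∀ a b, r a b → (p a ↔ p b)) {a b : α}
    (h : EqvGen r a b) :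
    (p a ↔ p b) ∧ ∀ ha hb, EqvGen (fun x y : Subtype p => r x y) ⟨a, ha⟩ ⟨b, hb⟩ := by
  induction h with
  | rel x y hxy => exact ⟨hp x y hxy, fun _ _ => .rel _ _ hxy⟩
  | refl x => exact ⟨.rfl, fun _ _ => .refl _⟩
  | symm x y _ ih => exact ⟨ih.1.symm, fun hy hx => .symm _ _ (ih.2 hx hy)⟩
  | trans x y z _ _ ih₁ ih₂ =>
      exact ⟨ih₁.1.trans ih₂.1, fun hx hz => .trans _ _ _ (ih₁.2 hx (ih₁.1.1 hx)) (ih₂.2 _ hz)⟩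

end Relation.EqvGen

theorem Relation.eqvGen_subtype_iff {α : Type*} {r : α → α → Prop} {p : α → Prop}
    (hp : ∀ a b, r a b → (p a ↔ p b)) (a b : Subtype p) :
    EqvGen (fun x y : Subtype p => r x y) a b ↔ EqvGen r a b :=
  ⟨fun h => h.map Subtype.val fun _ _ => id, fun h => (h.restrict hp).2 a.2 b.2⟩

theorem SylvAdj.perm {w₁ w₂ : List ℕ} (h : SylvAdj w₁ w₂) : w₁.Perm w₂ := by
  obtain ⟨u, u', u'', x, y, z, -, -, rfl, rfl⟩ := h
  exact (List.Perm.swap z x _).append_left u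

theorem SylvAdj.append {w₁ w₂ : List ℕ} (h : SylvAdj w₁ w₂) (u v : List ℕ) :
    SylvAdj (u ++ w₁ ++ v) (u ++ w₂ ++ v) := by
  obtain ⟨U, u', u'', x, y, z, hxy, hyz, rfl, rfl⟩ := h
  exact ⟨u ++ U, u', u'' ++ v, x, y, z, hxy, hyz, by simp, by simp⟩

theorem SylvAdj.sylvesterTree_eq {w₁ w₂ : List ℕ} (h : SylvAdj w₁ w₂) :
    sylvesterTree w₁ = sylvesterTree w₂ := by
  obtain ⟨u, u', u'', x, y, z, hxy, hyz, rfl, rfl⟩ := h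
  have hy : y ∈ (sylvesterTree (u' ++ y :: u'')).inorder :=
    (inorder_sylvesterTree_perm _).mem_iff.2 (by simp)
  unfold sylvesterTree
  rw [List.foldr_append, List.foldr_append]
  exact congrArg (u.foldr bstInsert)
    (bstInsert_bstInsert_comm hxy hyz (isBST_sylvesterTree (u' ++ y :: u'')) hy)

theorem SylvCong.append {w₁ w₂ : List ℕ} (h : SylvCong w₁ w₂) (u v : List ℕ) :
    SylvCong (u ++ w₁ ++ v) (u ++ w₂ ++ v) :=
  h.map (fun w => u ++ w ++ v) fun _ _ h => h.append u v

theorem SylvCong.sylvesterTree_eq {w₁ w₂ : List ℕ} (h : SylvCong w₁ w₂) :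
    sylvesterTree w₁ = sylvesterTree w₂ := by
  induction h with
  | rel x y hxy => exact hxy.sylvesterTree_eq
  | refl x => rfl
  | symm x y _ ih => exact ih.symm
  | trans x y z _ _ ih₁ ih₂ => exact ih₁.trans ih₂

theorem sylvCong_cons_append {a b : ℕ} (hab : a < b) {v : List ℕ} (ha : a ∈ v) :
    ∀ {S : List ℕ}, (∀ s ∈ S, s ≤ a) → SylvCong (b :: (S ++ v)) (S ++ b :: v)
  | [], _ => .refl _
  | s :: S, hS => by
      obtain ⟨p, q, rfl⟩ := List.append_of_mem ha
      have hswap : SylvAdj (s :: b :: (S ++ (p ++ a :: q))) (b :: s :: (S ++ (p ++ a :: q))) :=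
        ⟨[], S ++ p, q, s, a, b, hS s (by simp), hab, by simp, by simp⟩
      have hmove :=
        (sylvCong_cons_append hab ha (S := S) fun t ht => hS t (by simp [ht])).append [s] []
      simp only [List.singleton_append, List.append_nil] at hmove
      simp only [List.cons_append]
      exact .trans _ _ _ (.symm _ _ (.rel _ _ hswap)) hmove

theorem sylvCong_append_singleton (a : ℕ) : ∀ w : List ℕ,
    SylvCong (w ++ [a]) (w.filter (· ≤ a) ++ (w.filter (a < ·) ++ [a]))
  | [] => .refl _
  | b :: w => by
      have ih := (sylvCong_append_singleton a w).append [b] []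
      simp only [List.singleton_append, List.append_nil] at ih
      by_cases hba : b ≤ a
      · simpa [hba] using ih
      · have hmove := sylvCong_cons_append (not_le.1 hba) (v := w.filter (a < ·) ++ [a])
          (by simp) (S := w.filter (· ≤ a)) (by simp)
        simpa [SylvCong, hba, not_le.1 hba] using ih.trans _ _ _ hmove

theorem sylvCong_postorder_sylvesterTree (w : List ℕ) :
    SylvCong w (sylvesterTree w).postorder := by
  rcases w.eq_nil_or_concat' with rfl | ⟨v, a, rfl⟩
  · exact .refl _
  have hsmall := (sylvCong_postorder_sylvesterTree (v.filter (· ≤ a))).append []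
    (v.filter (a < ·) ++ [a])
  have hlarge := (sylvCong_postorder_sylvesterTree (v.filter (a < ·))).append
    (sylvesterTree (v.filter (· ≤ a))).postorder [a]
  rw [sylvesterTree_append_singleton, postorder]
  simp only [List.nil_append, List.append_assoc] at hsmall hlarge ⊢
  exact (sylvCong_append_singleton a v).trans _ _ _ (.trans _ _ _ hsmall hlarge)
termination_by w.length
decreasing_by all_goals subst_vars; simpa using Nat.lt_succ_of_le (List.length_filter_le _ _)

theorem sylvCong_iff_sylvesterTree_eq {w w' : List ℕ} :
    SylvCong w w' ↔ sylvesterTree w = sylvesterTree w' := by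
  refine ⟨SylvCong.sylvesterTree_eq, fun h => ?_⟩
  have hw' := sylvCong_postorder_sylvesterTree w'
  rw [← h] at hw'
  exact .trans _ _ _ (sylvCong_postorder_sylvesterTree w) (.symm _ _ hw')

def sylvesterSetoid (L : List ℕ) : Setoid {l : List ℕ // l.Perm L} :=
  ⟨fun a b => Relation.EqvGen (fun a b => SylvAdj a.1 b.1) a b, Relation.EqvGen.is_equivalence _⟩

theorem sylvesterSetoid_r_iff {L : List ℕ} (a b : {l : List ℕ // l.Perm L}) :
    (sylvesterSetoid L).r a b ↔ sylvesterTree a.1 = sylvesterTree b.1 :=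
  (Relation.eqvGen_subtype_iff (fun _ _ h => ⟨h.perm.symm.trans, h.perm.trans⟩) a b).trans
    sylvCong_iff_sylvesterTree_eq

/-- The shape of the insertion tree classifies sylvester classes of permutations. -/
theorem card_quotient_sylvesterSetoid_range' (k n : ℕ) :
    Nat.card (Quotient (sylvesterSetoid (List.range' k n))) = catalan n := by
  let f : Quotient (sylvesterSetoid (List.range' k n)) → treesOfNumNodesEq n :=
    Quotient.lift (fun w => ⟨(sylvesterTree w.1).shape, by
        rw [mem_treesOfNumNodesEq, numNodes_shape, ← length_inorder,
          (inorder_sylvesterTree_perm _).length_eq, w.2.length_eq, List.length_range']⟩)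
      fun a b h => Subtype.ext (congrArg shape ((sylvesterSetoid_r_iff a b).1 h))
  have hinj : f.Injective := by
    rintro ⟨a⟩ ⟨b⟩ h
    exact Quotient.sound ((sylvesterSetoid_r_iff a b).2
      (sylvesterTree_eq_of_perm_of_shape_eq (a.2.trans b.2.symm) (congrArg Subtype.val h)))
  have hsurj : f.Surjective := by
    rintro ⟨t, ht⟩
    have hperm : (labelInorder t k).postorder.Perm (List.range' k n) := by
      rw [← (mem_treesOfNumNodesEq.1 ht), ← inorder_labelInorder]
      exact postorder_perm_inorder _
    refine ⟨⟦⟨_, hperm⟩⟧, Subtype.ext ?_⟩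
    exact (congrArg shape (sylvesterTree_postorder (isBST_labelInorder t k))).trans
      (shape_labelInorder t k)
  rw [Nat.card_congr (Equiv.ofBijective f ⟨hinj, hsurj⟩), Nat.card_eq_finsetCard,
    treesOfNumNodesEq_card_eq_catalan]

/-- The number of sylvester congruence classes of permutations in `S_n` equals the
Catalan number `c_n = (1/(n+1)) * binomial(2n, n)`. -/
theorem stmt11 (n : ℕ) :
    Nat.card (Quotient
      (⟨fun a b : {l : List ℕ // l.Perm ((List.range n).map (· + 1))} =>
          Relation.EqvGen (fun a b => SylvAdj a.1 b.1) a b,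
        Relation.EqvGen.is_equivalence _⟩ : Setoid _))
      = (2 * n).choose n / (n + 1) := by
  have hL : (List.range n).map (· + 1) = List.range' 1 n := by
    rw [List.range'_eq_map_range]
    exact List.map_congr_left fun _ _ => Nat.add_comm _ _
  change Nat.card (Quotient (sylvesterSetoid ((List.range n).map (· + 1)))) = _
  rw [hL, card_quotient_sylvesterSetoid_range', catalan_eq_centralBinom_div, Nat.centralBinom]
end
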